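/- arXiv:1608.08871 — 6 statements merged into one kernel-verified Lean document; each statement's English description precedes it below -/
import Mathlib

section
/- Let d ≥ 1, x₀ ∈ E = EuclideanSpace ℝ (Fin d), h > 0, and let A, φ : E → ℝ be twice continuously differentiable on B = closedBall(x₀, h) with ∇φ(x₀) ≠ 0. Set M_{A,0} := sup_B |A|, M_{A,1} := sup_B ‖∇A‖, M_{A,2} := sup_B ‖∇²A‖, M₂ := sup_B ‖∇²φ‖ (operator norms), k₀ := ω‖∇φ(x₀)‖, d̂ := ∇φ(x₀)/‖∇φ(x₀)‖, and define the affine complex amplitude B(x) := (A(x₀) + ⟨∇A(x₀), x − x₀⟩)·exp(i ω (φ(x₀) − ⟨∇φ(x₀), x₀⟩)). Then for every ω > 0 and every x with ‖x − x₀‖ ≤ h, |A(x)·exp(i ω φ(x)) − B(x)·exp(i k₀ ⟨d̂, x⟩)| ≤ (M_{A,2}/2)·h² + (M_{A,0} + M_{A,1} h)·(ω M₂/2)·h². -/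
/-!
The plane wave recombines into `T(x) e^{iωL(x)}`, where `T` and `L` are the first-order Taylor
polynomials of `A` and `φ` at `x₀` (the two phases add up because `‖∇φ(x₀)‖ d̂ = ∇φ(x₀)`).
Since `t ↦ e^{it}` is 1-Lipschitz, `|A e^{iωφ} - T e^{iωL}| ≤ |A - T| + |T| ω |φ - L|`, and each
Taylor remainder is at most half the bound on the second derivative times `h²`.
-/

open Complex Metric Set Topology
open scoped InnerProductSpace

theorem Complex.norm_ofReal_mul_exp_sub_ofReal_mul_exp_le (a b α β : ℝ) :
    ‖(a : ℂ) * exp (I * α) - b * exp (I * β)‖ ≤ |a - b| + |b| * |α - β| := by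
  have hsplit : (a : ℂ) * exp (I * α) - b * exp (I * β)
      = ((a - b : ℝ) : ℂ) * exp (I * α) + b * exp (I * β) * (exp (I * (α - β : ℝ)) - 1) := by
    rw [mul_sub, mul_assoc, ← exp_add]
    push_cast
    ring_nf
  rw [hsplit]
  refine (norm_add_le _ _).trans ?_
  simp only [norm_mul, norm_real, Real.norm_eq_abs, mul_comm I, norm_exp_ofReal_mul_I, mul_one]
  gcongr
  simpa [mul_comm I] using Real.norm_exp_I_mul_ofReal_sub_one_le (x := α - β)

theorem norm_le_half_mul_sq_of_norm_deriv_le_mul {F : Type*} [NormedAddCommGroup F]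
    [NormedSpace ℝ F] {g g' : ℝ → F} {b K : ℝ}
    (hg : ∀ t ∈ Icc 0 b, HasDerivWithinAt g (g' t) (Icc 0 b) t) (hg0 : g 0 = 0)
    (hg' : ∀ t ∈ Ico 0 b, ‖g' t‖ ≤ K * t) {t : ℝ} (ht : t ∈ Icc 0 b) :
    ‖g t‖ ≤ K / 2 * t ^ 2 := by
  have hB : ∀ u, HasDerivAt (fun u : ℝ => K / 2 * u ^ 2) (K * u) u := fun u => by
    refine ((hasDerivAt_pow 2 u).const_mul (K / 2)).congr_deriv ?_
    norm_num
    ring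
  exact image_norm_le_of_norm_deriv_right_le_deriv_boundary
    (fun u hu => (hg u hu).continuousWithinAt)
    (fun u hu => (hg u (Ico_subset_Icc_self hu)).mono_of_mem_nhdsWithin
      (Icc_mem_nhdsGE_of_mem hu))
    (by simp [hg0]) hB hg' ht

theorem Convex.norm_image_sub_sub_le_of_norm_second_deriv_le
    {E F : Type*} [NormedAddCommGroup E] [NormedSpace ℝ E]
    [NormedAddCommGroup F] [NormedSpace ℝ F]
    {s : Set E} (hs : Convex ℝ s) {f : E → F} {f' : E → E →L[ℝ] F}
    {f'' : E → E →L[ℝ] E →L[ℝ] F} {C : ℝ}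
    (hf : ∀ y ∈ s, HasFDerivWithinAt f (f' y) s y)
    (hf' : ∀ y ∈ s, HasFDerivWithinAt f' (f'' y) s y)
    (hf'' : ∀ y ∈ s, ‖f'' y‖ ≤ C) {x₀ x : E} (hx₀ : x₀ ∈ s) (hx : x ∈ s) :
    ‖f x - f x₀ - f' x₀ (x - x₀)‖ ≤ C / 2 * ‖x - x₀‖ ^ 2 := by
  set v := x - x₀
  have hseg : ∀ t ∈ Icc (0 : ℝ) 1, x₀ + t • v ∈ s := fun t ht =>
    hs.add_smul_sub_mem hx₀ hx ht
  have hderiv : ∀ t ∈ Icc (0 : ℝ) 1,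
      HasDerivWithinAt (fun t : ℝ => f (x₀ + t • v) - f x₀ - t • f' x₀ v)
        (f' (x₀ + t • v) v - f' x₀ v) (Icc 0 1) t := by
    intro t ht
    have hline : HasDerivWithinAt (fun t : ℝ => x₀ + t • v) v (Icc 0 1) t := by
      simpa using (((hasDerivAt_id t).smul_const v).const_add x₀).hasDerivWithinAt
    exact (((hf _ (hseg t ht)).comp_hasDerivWithinAt t hline hseg).sub_const (f x₀)).sub
      (((hasDerivAt_id t).smul_const (f' x₀ v)).hasDerivWithinAt.congr_deriv (one_smul _ _))
  have hbound : ∀ t ∈ Ico (0 : ℝ) 1, ‖f' (x₀ + t • v) v - f' x₀ v‖ ≤ C * ‖v‖ ^ 2 * t := by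
    intro t ht
    have hlip : ‖f' (x₀ + t • v) - f' x₀‖ ≤ C * ‖x₀ + t • v - x₀‖ :=
      hs.norm_image_sub_le_of_norm_hasFDerivWithin_le hf' hf'' hx₀
        (hseg t (Ico_subset_Icc_self ht))
    rw [add_sub_cancel_left, norm_smul, Real.norm_of_nonneg ht.1] at hlip
    calc ‖f' (x₀ + t • v) v - f' x₀ v‖ ≤ ‖f' (x₀ + t • v) - f' x₀‖ * ‖v‖ :=
          (f' (x₀ + t • v) - f' x₀).le_opNorm v
      _ ≤ C * (t * ‖v‖) * ‖v‖ := by gcongr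
      _ = C * ‖v‖ ^ 2 * t := by ring
  have := norm_le_half_mul_sq_of_norm_deriv_le_mul hderiv (by simp) hbound
    (right_mem_Icc.2 zero_le_one)
  simpa [v, mul_div_right_comm] using this

section Gradient

variable {F : Type*} [NormedAddCommGroup F] [InnerProductSpace ℝ F] [CompleteSpace F]
  {f : F → ℝ} {x₀ : F} {r : ℝ}

theorem norm_gradient_eq_norm_fderivWithin {s : Set F} (hs : s ∈ 𝓝 x₀) :
    ‖gradient f x₀‖ = ‖fderivWithin ℝ f s x₀‖ := by
  rw [fderivWithin_of_mem_nhds hs, ← toDual_gradient, LinearIsometryEquiv.norm_map]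

theorem ContDiffOn.abs_sub_sub_inner_gradient_le (hr : 0 < r)
    (hf : ContDiffOn ℝ 2 f (closedBall x₀ r)) {C : ℝ}
    (hf'' : ∀ y ∈ closedBall x₀ r,
      ‖fderivWithin ℝ (fderivWithin ℝ f (closedBall x₀ r)) (closedBall x₀ r) y‖ ≤ C)
    {x : F} (hx : ‖x - x₀‖ ≤ r) :
    |f x - (f x₀ + ⟪gradient f x₀, x - x₀⟫_ℝ)| ≤ C / 2 * r ^ 2 := by
  set s := closedBall x₀ r
  have hu : UniqueDiffOn ℝ s := uniqueDiffOn_convex (convex_closedBall x₀ r)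
    (by rw [interior_closedBall x₀ hr.ne']; exact nonempty_ball.2 hr)
  have hf' : ContDiffOn ℝ 1 (fderivWithin ℝ f s) s := hf.fderivWithin hu (by norm_num)
  have htaylor := (convex_closedBall x₀ r).norm_image_sub_sub_le_of_norm_second_deriv_le
    (fun y hy => ((hf.differentiableOn (by norm_num)) y hy).hasFDerivWithinAt)
    (fun y hy => ((hf'.differentiableOn one_ne_zero) y hy).hasFDerivWithinAt) hf''
    (mem_closedBall_self hr.le) (mem_closedBall_iff_norm.2 hx)
  rw [inner_gradient_left, ← fderivWithin_of_mem_nhds (closedBall_mem_nhds x₀ hr)]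
  calc |f x - (f x₀ + fderivWithin ℝ f s x₀ (x - x₀))|
      = ‖f x - f x₀ - fderivWithin ℝ f s x₀ (x - x₀)‖ := by rw [Real.norm_eq_abs, sub_sub]
    _ ≤ C / 2 * ‖x - x₀‖ ^ 2 := htaylor
    _ ≤ C / 2 * r ^ 2 := by
        have : 0 ≤ C := (norm_nonneg (fderivWithin ℝ (fderivWithin ℝ f s) s x₀)).trans
          (hf'' x₀ (mem_closedBall_self hr.le))
        gcongr

end Gradient

theorem norm_mul_inner_inv_norm_smul {F : Type*} [NormedAddCommGroup F] [InnerProductSpace ℝ F]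
    (g x : F) : ‖g‖ * ⟪‖g‖⁻¹ • g, x⟫_ℝ = ⟪g, x⟫_ℝ := by
  rcases eq_or_ne g 0 with rfl | hg
  · simp
  · rw [real_inner_smul_left, mul_inv_cancel_left₀ (norm_ne_zero_iff.2 hg)]

theorem stmt_3_general {d : ℕ}
    (x₀ : EuclideanSpace ℝ (Fin d)) (h : ℝ) (hh : 0 < h)
    (A φ : EuclideanSpace ℝ (Fin d) → ℝ)
    (hA : ContDiffOn ℝ 2 A (closedBall x₀ h))
    (hφ : ContDiffOn ℝ 2 φ (closedBall x₀ h))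
    (MA0 MA1 MA2 M₂ : ℝ)
    (hMA0 : ∀ y ∈ closedBall x₀ h, |A y| ≤ MA0)
    (hMA1 : ∀ y ∈ closedBall x₀ h, ‖fderivWithin ℝ A (closedBall x₀ h) y‖ ≤ MA1)
    (hMA2 : ∀ y ∈ closedBall x₀ h,
      ‖fderivWithin ℝ (fun z => fderivWithin ℝ A (closedBall x₀ h) z)
          (closedBall x₀ h) y‖ ≤ MA2)
    (hM₂ : ∀ y ∈ closedBall x₀ h,
      ‖fderivWithin ℝ (fun z => fderivWithin ℝ φ (closedBall x₀ h) z)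
          (closedBall x₀ h) y‖ ≤ M₂) :
    ∀ ω : ℝ, 0 < ω → ∀ x : EuclideanSpace ℝ (Fin d), ‖x - x₀‖ ≤ h →
      ‖(A x : ℂ) * Complex.exp (Complex.I * (ω : ℂ) * (φ x : ℂ))
          - ((A x₀ + ⟪gradient A x₀, x - x₀⟫_ℝ : ℝ) : ℂ)
              * Complex.exp (Complex.I * (ω : ℂ)
                  * ((φ x₀ - ⟪gradient φ x₀, x₀⟫_ℝ : ℝ) : ℂ))
              * Complex.exp (Complex.I * ((ω * ‖gradient φ x₀‖ : ℝ) : ℂ)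
                  * ((⟪(‖gradient φ x₀‖)⁻¹ • gradient φ x₀, x⟫_ℝ : ℝ) : ℂ))‖
        ≤ MA2 / 2 * h ^ 2 + (MA0 + MA1 * h) * (ω * M₂ / 2) * h ^ 2 := by
  intro ω hω x hx
  set T := A x₀ + ⟪gradient A x₀, x - x₀⟫_ℝ
  set L := φ x₀ + ⟪gradient φ x₀, x - x₀⟫_ℝ
  have hx₀ : x₀ ∈ closedBall x₀ h := mem_closedBall_self hh.le
  have hphase : exp (I * ω * ((φ x₀ - ⟪gradient φ x₀, x₀⟫_ℝ : ℝ) : ℂ))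
      * exp (I * ((ω * ‖gradient φ x₀‖ : ℝ) : ℂ)
        * ((⟪(‖gradient φ x₀‖)⁻¹ • gradient φ x₀, x⟫_ℝ : ℝ) : ℂ))
      = exp (I * (ω * L : ℝ)) := by
    have hreal : ω * (φ x₀ - ⟪gradient φ x₀, x₀⟫_ℝ)
        + ω * (‖gradient φ x₀‖ * ⟪(‖gradient φ x₀‖)⁻¹ • gradient φ x₀, x⟫_ℝ) = ω * L := by
      rw [norm_mul_inner_inv_norm_smul]
      simp only [L, inner_sub_right]
      ring
    rw [← exp_add, ← hreal]
    push_cast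
    ring_nf
  have hT : |T| ≤ MA0 + MA1 * h := by
    have hgrad : ‖gradient A x₀‖ ≤ MA1 :=
      (norm_gradient_eq_norm_fderivWithin (closedBall_mem_nhds x₀ hh)).trans_le (hMA1 x₀ hx₀)
    calc |T| ≤ |A x₀| + ‖gradient A x₀‖ * ‖x - x₀‖ :=
          (abs_add_le _ _).trans (by gcongr; exact abs_real_inner_le_norm _ _)
      _ ≤ MA0 + MA1 * h := by
          gcongr
          · exact hMA0 x₀ hx₀
          · exact (norm_nonneg _).trans hgrad
  have hφL : |ω * φ x - ω * L| ≤ ω * (M₂ / 2 * h ^ 2) := by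
    rw [← mul_sub, abs_mul, abs_of_pos hω]
    exact mul_le_mul_of_nonneg_left (hφ.abs_sub_sub_inner_gradient_le hh hM₂ hx) hω.le
  rw [mul_assoc (T : ℂ), hphase,
    show I * ω * φ x = I * (ω * φ x : ℝ) by push_cast; ring]
  calc _ ≤ |A x - T| + |T| * |ω * φ x - ω * L| := norm_ofReal_mul_exp_sub_ofReal_mul_exp_le _ _ _ _
    _ ≤ MA2 / 2 * h ^ 2 + (MA0 + MA1 * h) * (ω * (M₂ / 2 * h ^ 2)) := by
        gcongr
        · exact hA.abs_sub_sub_inner_gradient_le hh hMA2 hx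
        · exact (abs_nonneg _).trans hT
    _ = MA2 / 2 * h ^ 2 + (MA0 + MA1 * h) * (ω * M₂ / 2) * h ^ 2 := by ring

/-- Local plane-wave approximation of a geometric-optics wave front `A(x)e^{iωφ(x)}`:
near `x₀` it is approximated by the plane wave `e^{ik₀⟨d̂, x⟩}` in the ray direction
`d̂ = ∇φ(x₀)/‖∇φ(x₀)‖` with `k₀ = ω‖∇φ(x₀)‖`, multiplied by the affine complex amplitude
`B(x) = (A(x₀) + ⟨∇A(x₀), x − x₀⟩)e^{iω(φ(x₀) − ⟨∇φ(x₀), x₀⟩)}`, with error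
`(M_{A,2}/2)h² + (M_{A,0} + M_{A,1}h)(ωM₂/2)h²`. -/
theorem stmt_3 {d : ℕ} (hd : 1 ≤ d)
    (x₀ : EuclideanSpace ℝ (Fin d)) (h : ℝ) (hh : 0 < h)
    (A φ : EuclideanSpace ℝ (Fin d) → ℝ)
    (hA : ContDiffOn ℝ 2 A (closedBall x₀ h))
    (hφ : ContDiffOn ℝ 2 φ (closedBall x₀ h))
    (hgrad : gradient φ x₀ ≠ 0)
    (MA0 MA1 MA2 M₂ : ℝ)
    (hMA0 : ∀ y ∈ closedBall x₀ h, |A y| ≤ MA0)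
    (hMA1 : ∀ y ∈ closedBall x₀ h, ‖fderivWithin ℝ A (closedBall x₀ h) y‖ ≤ MA1)
    (hMA2 : ∀ y ∈ closedBall x₀ h,
      ‖fderivWithin ℝ (fun z => fderivWithin ℝ A (closedBall x₀ h) z)
          (closedBall x₀ h) y‖ ≤ MA2)
    (hM₂ : ∀ y ∈ closedBall x₀ h,
      ‖fderivWithin ℝ (fun z => fderivWithin ℝ φ (closedBall x₀ h) z)
          (closedBall x₀ h) y‖ ≤ M₂) :
    ∀ ω : ℝ, 0 < ω → ∀ x : EuclideanSpace ℝ (Fin d), ‖x - x₀‖ ≤ h →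
      ‖(A x : ℂ) * Complex.exp (Complex.I * (ω : ℂ) * (φ x : ℂ))
          - ((A x₀ + ⟪gradient A x₀, x - x₀⟫_ℝ : ℝ) : ℂ)
              * Complex.exp (Complex.I * (ω : ℂ)
                  * ((φ x₀ - ⟪gradient φ x₀, x₀⟫_ℝ : ℝ) : ℂ))
              * Complex.exp (Complex.I * ((ω * ‖gradient φ x₀‖ : ℝ) : ℂ)
                  * ((⟪(‖gradient φ x₀‖)⁻¹ • gradient φ x₀, x⟫_ℝ : ℝ) : ℂ))‖
        ≤ MA2 / 2 * h ^ 2 + (MA0 + MA1 * h) * (ω * M₂ / 2) * h ^ 2 :=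
  stmt_3_general x₀ h hh A φ hA hφ MA0 MA1 MA2 M₂ hMA0 hMA1 hMA2 hM₂
end

section
/- Let d ≥ 1, Ω ⊆ E = EuclideanSpace ℝ (Fin d), h > 0, J a finite index set, nodes x_j ∈ E for j ∈ J, and functions φ_j : E → ℝ with 0 ≤ φ_j(x) ≤ 1 for all x, Σ_{j∈J} φ_j(x) = 1 for every x ∈ Ω, and φ_j(x) = 0 whenever ‖x − x_j‖ > h. Let φ : E → ℝ be twice continuously differentiable with ‖∇²φ(y)‖ ≤ M₂ (operator norm) for all y ∈ E, let a_j ∈ ℝ with |a_j| ≤ M₀ for all j ∈ J, and set ℓ_j(x) := φ(x_j) + ⟨∇φ(x_j), x − x_j⟩. Then for every ω > 0 and every x ∈ Ω, |Σ_{j∈J} a_j φ_j(x)·(exp(i ω φ(x)) − exp(i ω ℓ_j(x)))| ≤ (ω h² M₂ M₀)/2. -/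
/-!
Since `t ↦ e^{it}` is 1-Lipschitz, each term is bounded by `|aⱼ| φⱼ(x) ω |φ(x) - ℓⱼ(x)|`.
Taylor's theorem with the Hessian bound gives `|φ(x) - ℓⱼ(x)| ≤ M₂ ‖x - xⱼ‖² / 2`, and
`‖x - xⱼ‖ ≤ h` wherever `φⱼ(x) ≠ 0`; summing against the partition of unity yields the claim.
-/

open Complex
open scoped InnerProductSpace

lemma norm_exp_I_mul_ofReal_sub_exp_I_mul_ofReal_le (s t : ℝ) :
    ‖exp (I * s) - exp (I * t)‖ ≤ |s - t| := by
  have hfactor : exp (I * s) - exp (I * t) = exp (I * t) * (exp (I * ↑(s - t)) - 1) := by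
    rw [mul_sub, ← Complex.exp_add]
    push_cast
    ring_nf
  rw [hfactor, norm_mul, norm_exp_I_mul_ofReal, one_mul, ← Real.norm_eq_abs]
  exact Real.norm_exp_I_mul_ofReal_sub_one_le

lemma norm_le_half_of_norm_deriv_le_mul {F : Type*} [NormedAddCommGroup F] [NormedSpace ℝ F]
    {g g' : ℝ → F} {K : ℝ} (hg : ∀ t ∈ Set.Icc (0 : ℝ) 1, HasDerivAt g (g' t) t)
    (hg₀ : g 0 = 0) (hg' : ∀ t ∈ Set.Ico (0 : ℝ) 1, ‖g' t‖ ≤ K * t) :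
    ‖g 1‖ ≤ K / 2 := by
  have hB : ∀ t : ℝ, HasDerivAt (fun t => K / 2 * t ^ 2) (K * t) t := fun t =>
    ((hasDerivAt_pow 2 t).const_mul (K / 2)).congr_deriv (by norm_num; ring)
  simpa using image_norm_le_of_norm_deriv_right_le_deriv_boundary
    (fun t ht => (hg t ht).continuousAt.continuousWithinAt)
    (fun t ht => (hg t (Set.Ico_subset_Icc_self ht)).hasDerivWithinAt) (by simp [hg₀]) hB hg'
    (Set.right_mem_Icc.2 zero_le_one)

theorem norm_sub_sub_fderiv_le_of_norm_fderiv_fderiv_le {E F : Type*} [NormedAddCommGroup E]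
    [NormedSpace ℝ E] [NormedAddCommGroup F] [NormedSpace ℝ F] {f : E → F}
    (hf : ContDiff ℝ 2 f) {M : ℝ} (hM : ∀ y, ‖fderiv ℝ (fderiv ℝ f) y‖ ≤ M) (x₀ x : E) :
    ‖f x - f x₀ - fderiv ℝ f x₀ (x - x₀)‖ ≤ M / 2 * ‖x - x₀‖ ^ 2 := by
  set v := x - x₀
  have hfderiv_lip : ∀ y, ‖fderiv ℝ f y - fderiv ℝ f x₀‖ ≤ M * ‖y - x₀‖ := fun y =>
    Convex.norm_image_sub_le_of_norm_fderiv_le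
      (fun z _ => (hf.fderiv_right le_rfl).differentiable one_ne_zero z) (fun z _ => hM z)
      convex_univ (Set.mem_univ x₀) (Set.mem_univ y)
  have hg : ∀ t : ℝ, HasDerivAt (fun t : ℝ => f (x₀ + t • v) - f x₀ - t • fderiv ℝ f x₀ v)
      (fderiv ℝ f (x₀ + t • v) v - fderiv ℝ f x₀ v) t := fun t => by
    have hline : HasDerivAt (fun t : ℝ => x₀ + t • v) v t := by
      simpa using ((hasDerivAt_id t).smul_const v).const_add x₀
    have hcomp := ((hf.differentiable two_ne_zero _).hasFDerivAt.comp_hasDerivAt t hline)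
    simpa using (hcomp.sub_const (f x₀)).fun_sub
      ((hasDerivAt_id t).smul_const (fderiv ℝ f x₀ v))
  have hg' : ∀ t ∈ Set.Ico (0 : ℝ) 1,
      ‖fderiv ℝ f (x₀ + t • v) v - fderiv ℝ f x₀ v‖ ≤ M * ‖v‖ ^ 2 * t := fun t ht => by
    calc ‖fderiv ℝ f (x₀ + t • v) v - fderiv ℝ f x₀ v‖
        ≤ ‖fderiv ℝ f (x₀ + t • v) - fderiv ℝ f x₀‖ * ‖v‖ :=
          (fderiv ℝ f (x₀ + t • v) - fderiv ℝ f x₀).le_opNorm v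
      _ ≤ M * (t * ‖v‖) * ‖v‖ := by
          gcongr
          simpa [norm_smul, abs_of_nonneg ht.1] using hfderiv_lip (x₀ + t • v)
      _ = M * ‖v‖ ^ 2 * t := by ring
  simpa [v, mul_div_right_comm] using
    norm_le_half_of_norm_deriv_le_mul (fun t _ => hg t) (by simp) hg'

theorem norm_exp_I_mul_sub_exp_I_mul_linearization_le {E : Type*} [NormedAddCommGroup E]
    [InnerProductSpace ℝ E] [CompleteSpace E] {φ : E → ℝ} (hφ : ContDiff ℝ 2 φ) {M : ℝ}
    (hM : ∀ y, ‖fderiv ℝ (fderiv ℝ φ) y‖ ≤ M) {ω : ℝ} (hω : 0 ≤ ω) (x₀ x : E) :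
    ‖exp (I * ω * φ x) - exp (I * ω * ↑(φ x₀ + ⟪gradient φ x₀, x - x₀⟫_ℝ))‖
      ≤ ω * (M / 2 * ‖x - x₀‖ ^ 2) := by
  have hinner : ⟪gradient φ x₀, x - x₀⟫_ℝ = fderiv ℝ φ x₀ (x - x₀) :=
    InnerProductSpace.toDual_symm_apply
  calc _ = ‖exp (I * ↑(ω * φ x)) - exp (I * ↑(ω * (φ x₀ + ⟪gradient φ x₀, x - x₀⟫_ℝ)))‖ := by
        push_cast; ring_nf
    _ ≤ |ω * φ x - ω * (φ x₀ + ⟪gradient φ x₀, x - x₀⟫_ℝ)| :=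
        norm_exp_I_mul_ofReal_sub_exp_I_mul_ofReal_le _ _
    _ = ω * |φ x - φ x₀ - fderiv ℝ φ x₀ (x - x₀)| := by
        rw [← mul_sub, abs_mul, abs_of_nonneg hω, hinner, sub_add_eq_sub_sub]
    _ ≤ ω * (M / 2 * ‖x - x₀‖ ^ 2) := by
        gcongr
        exact norm_sub_sub_fderiv_le_of_norm_fderiv_fderiv_le hφ hM x₀ x

lemma norm_sum_le_of_norm_le_mul_weight {ι E : Type*} [SeminormedAddCommGroup E]
    {J : Finset ι} {f : ι → E} {w : ι → ℝ} {K : ℝ} (hf : ∀ j ∈ J, ‖f j‖ ≤ K * w j)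
    (hw : ∑ j ∈ J, w j = 1) : ‖∑ j ∈ J, f j‖ ≤ K :=
  calc ‖∑ j ∈ J, f j‖ ≤ ∑ j ∈ J, K * w j := (norm_sum_le _ _).trans (Finset.sum_le_sum hf)
    _ = K := by rw [← Finset.mul_sum, hw, mul_one]

theorem stmt_4_general {d : ℕ} {ι : Type*} (J : Finset ι)
    (Ω : Set (EuclideanSpace ℝ (Fin d))) (h : ℝ)
    (xj : ι → EuclideanSpace ℝ (Fin d))
    (φj : ι → EuclideanSpace ℝ (Fin d) → ℝ)
    (hφj : ∀ j ∈ J, ∀ x, 0 ≤ φj j x ∧ φj j x ≤ 1)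
    (hsum : ∀ x ∈ Ω, ∑ j ∈ J, φj j x = 1)
    (hsupp : ∀ j ∈ J, ∀ x, h < ‖x - xj j‖ → φj j x = 0)
    (φ : EuclideanSpace ℝ (Fin d) → ℝ) (hφ : ContDiff ℝ 2 φ)
    (M₂ : ℝ) (hM₂ : ∀ y, ‖fderiv ℝ (fun z => fderiv ℝ φ z) y‖ ≤ M₂)
    (a : ι → ℝ) (M₀ : ℝ) (ha : ∀ j ∈ J, |a j| ≤ M₀) :
    ∀ ω : ℝ, 0 < ω → ∀ x ∈ Ω,
      ‖∑ j ∈ J, (a j : ℂ) * (φj j x : ℂ) *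
          (Complex.exp (Complex.I * (ω : ℂ) * (φ x : ℂ))
            - Complex.exp (Complex.I * (ω : ℂ)
                * ((φ (xj j) + ⟪gradient φ (xj j), x - xj j⟫_ℝ : ℝ) : ℂ)))‖
        ≤ ω * h ^ 2 * M₂ * M₀ / 2 := by
  intro ω hω x hx
  refine norm_sum_le_of_norm_le_mul_weight (fun j hj => ?_) (hsum x hx)
  rcases lt_or_ge h ‖x - xj j‖ with hfar | hnear
  · simp [hsupp j hj x hfar]
  have hweight : 0 ≤ φj j x := (hφj j hj x).1
  have hM₀ : 0 ≤ M₀ := (abs_nonneg _).trans (ha j hj)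
  have hM₂₀ : 0 ≤ M₂ := (norm_nonneg (fderiv ℝ (fun z => fderiv ℝ φ z) 0)).trans (hM₂ 0)
  rw [norm_mul, norm_mul, norm_real, norm_real, Real.norm_eq_abs, Real.norm_of_nonneg hweight]
  calc _ ≤ M₀ * φj j x * (ω * (M₂ / 2 * h ^ 2)) := by
        gcongr
        · exact ha j hj
        · exact (norm_exp_I_mul_sub_exp_I_mul_linearization_le hφ hM₂ hω.le (xj j) x).trans
            (by gcongr)
    _ = ω * h ^ 2 * M₂ * M₀ / 2 * φj j x := by ring

/-- For a nonnegative partition of unity `{φⱼ}` on `Ω` subordinate to balls of radius `h`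
centered at nodes `xⱼ`, for a phase `φ` with Hessian bounded by `M₂` and coefficients
`|aⱼ| ≤ M₀`, the difference between the oscillatory factor `e^{iωφ}` and its nodewise
linearizations `e^{iωℓⱼ}`, `ℓⱼ(x) = φ(xⱼ) + ⟨∇φ(xⱼ), x − xⱼ⟩`, weighted by the partition,
satisfies `|Σⱼ aⱼφⱼ(x)(e^{iωφ(x)} − e^{iωℓⱼ(x)})| ≤ ωh²M₂M₀/2` on `Ω`. -/
theorem stmt_4 {d : ℕ} (hd : 1 ≤ d) {ι : Type*} (J : Finset ι)
    (Ω : Set (EuclideanSpace ℝ (Fin d))) (h : ℝ) (hh : 0 < h)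
    (xj : ι → EuclideanSpace ℝ (Fin d))
    (φj : ι → EuclideanSpace ℝ (Fin d) → ℝ)
    (hφj : ∀ j ∈ J, ∀ x, 0 ≤ φj j x ∧ φj j x ≤ 1)
    (hsum : ∀ x ∈ Ω, ∑ j ∈ J, φj j x = 1)
    (hsupp : ∀ j ∈ J, ∀ x, h < ‖x - xj j‖ → φj j x = 0)
    (φ : EuclideanSpace ℝ (Fin d) → ℝ) (hφ : ContDiff ℝ 2 φ)
    (M₂ : ℝ) (hM₂ : ∀ y, ‖fderiv ℝ (fun z => fderiv ℝ φ z) y‖ ≤ M₂)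
    (a : ι → ℝ) (M₀ : ℝ) (ha : ∀ j ∈ J, |a j| ≤ M₀) :
    ∀ ω : ℝ, 0 < ω → ∀ x ∈ Ω,
      ‖∑ j ∈ J, (a j : ℂ) * (φj j x : ℂ) *
          (Complex.exp (Complex.I * (ω : ℂ) * (φ x : ℂ))
            - Complex.exp (Complex.I * (ω : ℂ)
                * ((φ (xj j) + ⟪gradient φ (xj j), x - xj j⟫_ℝ : ℝ) : ℂ)))‖
        ≤ ω * h ^ 2 * M₂ * M₀ / 2 :=
  stmt_4_general J Ω h xj φj hφj hsum hsupp φ hφ M₂ hM₂ a M₀ ha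
end

section
/- Let d ≥ 1 and let Ω ⊆ E = EuclideanSpace ℝ (Fin d) be measurable with finite Lebesgue measure |Ω|. Let h > 0, J a finite index set, nodes x_j ∈ E, and φ_j : E → ℝ with 0 ≤ φ_j(x) ≤ 1, Σ_{j∈J} φ_j(x) = 1 for every x ∈ Ω, and φ_j(x) = 0 whenever ‖x − x_j‖ > h. Let A : E → ℝ with |A(x_j)| ≤ M₀ for all j, and let φ : E → ℝ be twice continuously differentiable with ‖∇²φ(y)‖ ≤ M₂ for all y. Define u(x) := A(x)·exp(i ω φ(x)), ℓ_j(x) := φ(x_j) + ⟨∇φ(x_j), x − x_j⟩, and the ray interpolant u_I(x) := Σ_{j∈J} A(x_j) φ_j(x)·exp(i ω ℓ_j(x)). Then for every ω > 0, ‖u − u_I‖_{L²(Ω)} ≤ ‖A − Σ_{j∈J} A(x_j)φ_j‖_{L²(Ω)} + (ω h² M₂ M₀ / 2)·|Ω|^{1/2}. -/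
/-!
On `Ω` the partition of unity gives
`u - u_I = (A - ∑ⱼ A(xⱼ)φⱼ) e^{iωφ} + ∑ⱼ A(xⱼ)φⱼ (e^{iωφ} - e^{iωℓⱼ})`.
On the support of `φⱼ` we have `‖x - xⱼ‖ ≤ h`, so Taylor's theorem gives `|φ - ℓⱼ| ≤ M₂h²/2`,
and since `t ↦ e^{iωt}` is `ω`-Lipschitz the second sum is bounded pointwise by `ωh²M₂M₀/2`.
Minkowski's inequality in `L²(Ω)` concludes; as `A` need not be measurable, it is applied to a
measurable minorant with the same `L²` norm.
-/

open Complex MeasureTheory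
open scoped InnerProductSpace ENNReal

section Minkowski

variable {α : Type*} [MeasurableSpace α] {μ : Measure α} {p : ℝ≥0∞}

theorem exists_measurable_le_eLpNorm_eq (f : α → ℝ≥0∞) (hp0 : p ≠ 0) (hp : p ≠ ∞) :
    ∃ g, Measurable g ∧ g ≤ f ∧ eLpNorm g p μ = eLpNorm f p μ := by
  have hp_pos : 0 < p.toReal := ENNReal.toReal_pos hp0 hp
  obtain ⟨g, hg_meas, hg_le, hg_eq⟩ :=
    exists_measurable_le_lintegral_eq μ fun x => f x ^ p.toReal
  refine ⟨fun x => g x ^ p.toReal⁻¹, hg_meas.pow_const _, fun x => ?_, ?_⟩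
  · simpa [hp_pos.ne'] using ENNReal.rpow_le_rpow (hg_le x) (inv_nonneg.2 hp_pos.le)
  · simp only [eLpNorm_eq_lintegral_rpow_enorm_toReal hp0 hp, enorm_eq_self,
      ← ENNReal.rpow_mul, inv_mul_cancel₀ hp_pos.ne', ENNReal.rpow_one, hg_eq]

theorem eLpNorm_add_le_of_measurable_right {f g : α → ℝ≥0∞} (hg : Measurable g) (hp1 : 1 ≤ p)
    (hp : p ≠ ∞) : eLpNorm (f + g) p μ ≤ eLpNorm f p μ + eLpNorm g p μ := by
  obtain ⟨m, hm_meas, hm_le, hm_eq⟩ :=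
    exists_measurable_le_eLpNorm_eq (μ := μ) (f + g) (zero_lt_one.trans_le hp1).ne' hp
  calc eLpNorm (f + g) p μ = eLpNorm m p μ := hm_eq.symm
    _ ≤ eLpNorm (m - g + g) p μ := eLpNorm_mono_enorm fun _ => le_tsub_add
    _ ≤ eLpNorm (m - g) p μ + eLpNorm g p μ :=
        eLpNorm_add_le (hm_meas.sub hg).aestronglyMeasurable hg.aestronglyMeasurable hp1
    _ ≤ eLpNorm f p μ + eLpNorm g p μ := by
        gcongr
        exact eLpNorm_mono_enorm fun x => tsub_le_iff_right.2 (hm_le x)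

end Minkowski

section Taylor

variable {E F : Type*} [NormedAddCommGroup E] [NormedSpace ℝ E]
  [NormedAddCommGroup F] [NormedSpace ℝ F]

theorem norm_image_sub_sub_fderiv_le_of_lipschitz_fderiv {f : E → F} (hf : Differentiable ℝ f)
    {M : ℝ} {p : E} (hM : ∀ y, ‖fderiv ℝ f y - fderiv ℝ f p‖ ≤ M * ‖y - p‖) (x : E) :
    ‖f x - f p - fderiv ℝ f p (x - p)‖ ≤ M / 2 * ‖x - p‖ ^ 2 := by
  set v := x - p
  have hline : ∀ t : ℝ, HasDerivAt (fun t : ℝ => p + t • v) v t := fun t => by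
    simpa using ((hasDerivAt_id t).smul_const v).const_add p
  have hderiv : ∀ t : ℝ, HasDerivAt (fun t : ℝ => f (p + t • v) - f p - t • fderiv ℝ f p v)
      (fderiv ℝ f (p + t • v) v - fderiv ℝ f p v) t := fun t => by
    have := (hf (p + t • v)).hasFDerivAt.comp_hasDerivAt t (hline t)
    simpa using (this.sub_const (f p)).fun_sub ((hasDerivAt_id t).smul_const (fderiv ℝ f p v))
  have hbound : ∀ t ∈ Set.Ico (0 : ℝ) 1,
      ‖fderiv ℝ f (p + t • v) v - fderiv ℝ f p v‖ ≤ M * ‖v‖ ^ 2 * t := fun t ht =>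
    calc ‖fderiv ℝ f (p + t • v) v - fderiv ℝ f p v‖
        ≤ ‖fderiv ℝ f (p + t • v) - fderiv ℝ f p‖ * ‖v‖ :=
          (fderiv ℝ f (p + t • v) - fderiv ℝ f p).le_opNorm v
      _ ≤ M * ‖p + t • v - p‖ * ‖v‖ := by gcongr; exact hM _
      _ = M * ‖v‖ ^ 2 * t := by
          rw [add_sub_cancel_left, norm_smul, Real.norm_of_nonneg ht.1]; ring
  -- Fencing by the parabola, rather than the mean value inequality, keeps the factor `1 / 2`.
  have hB : ∀ t : ℝ, HasDerivAt (fun t : ℝ => M / 2 * ‖v‖ ^ 2 * t ^ 2) (M * ‖v‖ ^ 2 * t) t :=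
    fun t => by
      have h := (hasDerivAt_pow 2 t).const_mul (M / 2 * ‖v‖ ^ 2)
      rwa [show M / 2 * ‖v‖ ^ 2 * ((2 : ℕ) * t ^ (2 - 1)) = M * ‖v‖ ^ 2 * t by push_cast; ring] at h
  simpa [v] using image_norm_le_of_norm_deriv_right_le_deriv_boundary
    (fun t _ => (hderiv t).continuousAt.continuousWithinAt)
    (fun t _ => (hderiv t).hasDerivWithinAt) (by simp) hB hbound (Set.right_mem_Icc.2 zero_le_one)

theorem norm_fderiv_sub_le_of_norm_fderiv_fderiv_le {f : E → F}
    (hf : ContDiff ℝ 2 f) {M : ℝ} (hM : ∀ y, ‖fderiv ℝ (fderiv ℝ f) y‖ ≤ M) (x y : E) :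
    ‖fderiv ℝ f y - fderiv ℝ f x‖ ≤ M * ‖y - x‖ :=
  convex_univ.norm_image_sub_le_of_norm_fderiv_le
    (fun _ _ => ((hf.fderiv_right le_rfl).differentiable one_ne_zero).differentiableAt)
    (fun z _ => hM z) (Set.mem_univ x) (Set.mem_univ y)

end Taylor

section Linearization

variable {E : Type*} [NormedAddCommGroup E] [InnerProductSpace ℝ E] [CompleteSpace E]

noncomputable def linearization (φ : E → ℝ) (p x : E) : ℝ := φ p + ⟪gradient φ p, x - p⟫_ℝ

theorem abs_sub_linearization_le {φ : E → ℝ} (hφ : ContDiff ℝ 2 φ) {M : ℝ}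
    (hM : ∀ y, ‖fderiv ℝ (fderiv ℝ φ) y‖ ≤ M) (p x : E) :
    |φ x - linearization φ p x| ≤ M / 2 * ‖x - p‖ ^ 2 := by
  have h := norm_image_sub_sub_fderiv_le_of_lipschitz_fderiv (hφ.differentiable two_ne_zero)
    (norm_fderiv_sub_le_of_norm_fderiv_fderiv_le hφ hM p) x
  rwa [Real.norm_eq_abs, sub_sub, ← InnerProductSpace.toDual_symm_apply] at h

end Linearization

theorem norm_exp_I_mul_sub_exp_I_mul_le {ω : ℝ} (hω : 0 ≤ ω) (a b : ℝ) :
    ‖exp (I * ω * a) - exp (I * ω * b)‖ ≤ ω * |a - b| := by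
  have h : exp (I * ω * a) - exp (I * ω * b)
      = exp (I * ↑(ω * b)) * (exp (I * ↑(ω * (a - b))) - 1) := by
    rw [mul_sub, ← exp_add]; push_cast; ring_nf
  calc ‖exp (I * ω * a) - exp (I * ω * b)‖ = ‖exp (I * ↑(ω * (a - b))) - 1‖ := by
        rw [h, norm_mul, norm_exp_I_mul_ofReal, one_mul]
    _ ≤ ‖ω * (a - b)‖ := Real.norm_exp_I_mul_ofReal_sub_one_le
    _ = ω * |a - b| := by rw [norm_mul, Real.norm_of_nonneg hω, Real.norm_eq_abs]

theorem norm_mul_sub_sum_le {ι : Type*} (J : Finset ι) (a : ℝ) {z : ℂ} (hz : ‖z‖ = 1)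
    (c w : ι → ℝ) (e : ι → ℂ) (hw : ∀ j ∈ J, 0 ≤ w j) (hw_sum : ∑ j ∈ J, w j = 1) {B : ℝ}
    (hB : ∀ j ∈ J, w j ≠ 0 → |c j| * ‖z - e j‖ ≤ B) :
    ‖a * z - ∑ j ∈ J, c j * w j * e j‖ ≤ |a - ∑ j ∈ J, c j * w j| + B := by
  have hsplit : a * z - ∑ j ∈ J, c j * w j * e j
      = ((a - ∑ j ∈ J, c j * w j : ℝ) : ℂ) * z + ∑ j ∈ J, (c j * w j : ℂ) * (z - e j) := by
    push_cast
    simp only [mul_sub, Finset.sum_sub_distrib, ← Finset.sum_mul]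
    ring
  have hterm : ∀ j ∈ J, ‖(c j * w j : ℂ) * (z - e j)‖ ≤ B * w j := fun j hj => by
    rcases eq_or_ne (w j) 0 with h0 | h0
    · simp [h0]
    rw [norm_mul, norm_mul, norm_real, norm_real, Real.norm_eq_abs, Real.norm_of_nonneg (hw j hj),
      mul_right_comm]
    exact mul_le_mul_of_nonneg_right (hB j hj h0) (hw j hj)
  calc ‖a * z - ∑ j ∈ J, c j * w j * e j‖
      ≤ ‖((a - ∑ j ∈ J, c j * w j : ℝ) : ℂ) * z‖ + ∑ j ∈ J, ‖(c j * w j : ℂ) * (z - e j)‖ := by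
        rw [hsplit]; exact (norm_add_le _ _).trans (by gcongr; exact norm_sum_le _ _)
    _ ≤ |a - ∑ j ∈ J, c j * w j| + ∑ j ∈ J, B * w j := by
        rw [norm_mul, hz, mul_one, norm_real, Real.norm_eq_abs]
        gcongr with j hj
        exact hterm j hj
    _ = |a - ∑ j ∈ J, c j * w j| + B := by rw [← Finset.mul_sum, hw_sum, mul_one]

theorem norm_wave_sub_rayInterpolant_le {E : Type*} [NormedAddCommGroup E]
    [InnerProductSpace ℝ E] [CompleteSpace E] {ι : Type*} (J : Finset ι) (xj : ι → E)
    (φj : ι → E → ℝ) (A : E → ℝ) {M₀ : ℝ} (hM₀ : ∀ j ∈ J, |A (xj j)| ≤ M₀) {φ : E → ℝ}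
    (hφ : ContDiff ℝ 2 φ) {M₂ : ℝ} (hM₂ : ∀ y, ‖fderiv ℝ (fderiv ℝ φ) y‖ ≤ M₂) {h ω : ℝ}
    (hω : 0 ≤ ω) {x : E} (hφj : ∀ j ∈ J, 0 ≤ φj j x) (hsum : ∑ j ∈ J, φj j x = 1)
    (hsupp : ∀ j ∈ J, h < ‖x - xj j‖ → φj j x = 0) :
    ‖(A x : ℂ) * exp (I * ω * φ x)
        - ∑ j ∈ J, (A (xj j) : ℂ) * (φj j x : ℂ) * exp (I * ω * linearization φ (xj j) x)‖
      ≤ |A x - ∑ j ∈ J, A (xj j) * φj j x| + ω * h ^ 2 * M₂ * M₀ / 2 := by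
  have hM₂_nonneg : 0 ≤ M₂ := (norm_nonneg (fderiv ℝ (fderiv ℝ φ) x)).trans (hM₂ x)
  refine norm_mul_sub_sum_le J (A x) (by rw [mul_assoc, ← ofReal_mul, norm_exp_I_mul_ofReal])
    (fun j => A (xj j)) (fun j => φj j x) _ hφj hsum fun j hj hne => ?_
  have hx : ‖x - xj j‖ ≤ h := not_lt.1 (mt (hsupp j hj) hne)
  have hexp : ‖exp (I * ω * φ x) - exp (I * ω * linearization φ (xj j) x)‖
      ≤ ω * (M₂ / 2 * h ^ 2) :=
    calc _ ≤ ω * |φ x - linearization φ (xj j) x| := norm_exp_I_mul_sub_exp_I_mul_le hω _ _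
      _ ≤ ω * (M₂ / 2 * ‖x - xj j‖ ^ 2) := by gcongr; exact abs_sub_linearization_le hφ hM₂ _ _
      _ ≤ ω * (M₂ / 2 * h ^ 2) := by gcongr
  calc |A (xj j)| * ‖exp (I * ω * φ x) - exp (I * ω * linearization φ (xj j) x)‖
      ≤ M₀ * (ω * (M₂ / 2 * h ^ 2)) :=
        mul_le_mul (hM₀ j hj) hexp (norm_nonneg _) ((abs_nonneg _).trans (hM₀ j hj))
    _ = ω * h ^ 2 * M₂ * M₀ / 2 := by ring

theorem ENNReal.rpow_half_eq_ofReal_sqrt {a : ℝ≥0∞} (ha : a ≠ ∞) :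
    a ^ (1 / 2 : ℝ) = ENNReal.ofReal (Real.sqrt a.toReal) := by
  rw [Real.sqrt_eq_rpow, ← ENNReal.ofReal_rpow_of_nonneg ENNReal.toReal_nonneg (by norm_num),
    ENNReal.ofReal_toReal ha]

theorem stmt_5_general {d : ℕ} {ι : Type*} (J : Finset ι)
    (Ω : Set (EuclideanSpace ℝ (Fin d)))
    (hΩmeas : MeasurableSet Ω) (hΩfin : volume Ω < ⊤)
    (h : ℝ)
    (xj : ι → EuclideanSpace ℝ (Fin d))
    (φj : ι → EuclideanSpace ℝ (Fin d) → ℝ)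
    (hφj : ∀ j ∈ J, ∀ x, 0 ≤ φj j x ∧ φj j x ≤ 1)
    (hsum : ∀ x ∈ Ω, ∑ j ∈ J, φj j x = 1)
    (hsupp : ∀ j ∈ J, ∀ x, h < ‖x - xj j‖ → φj j x = 0)
    (A : EuclideanSpace ℝ (Fin d) → ℝ)
    (M₀ : ℝ) (hM₀ : ∀ j ∈ J, |A (xj j)| ≤ M₀)
    (φ : EuclideanSpace ℝ (Fin d) → ℝ) (hφ : ContDiff ℝ 2 φ)
    (M₂ : ℝ) (hM₂ : ∀ y, ‖fderiv ℝ (fun z => fderiv ℝ φ z) y‖ ≤ M₂) :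
    ∀ ω : ℝ, 0 < ω →
      eLpNorm (fun x => (A x : ℂ) * Complex.exp (Complex.I * (ω : ℂ) * (φ x : ℂ))
          - ∑ j ∈ J, (A (xj j) : ℂ) * (φj j x : ℂ)
              * Complex.exp (Complex.I * (ω : ℂ)
                  * ((φ (xj j) + ⟪gradient φ (xj j), x - xj j⟫_ℝ : ℝ) : ℂ)))
        2 (volume.restrict Ω)
      ≤ eLpNorm (fun x => A x - ∑ j ∈ J, A (xj j) * φj j x) 2 (volume.restrict Ω)
        + ENNReal.ofReal (ω * h ^ 2 * M₂ * M₀ / 2 * Real.sqrt (volume Ω).toReal) := by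
  intro ω hω
  set B := ω * h ^ 2 * M₂ * M₀ / 2
  set s := fun x => ∑ j ∈ J, A (xj j) * φj j x
  calc eLpNorm _ 2 (volume.restrict Ω)
      ≤ eLpNorm ((fun x => ‖A x - s x‖ₑ) + fun _ => ENNReal.ofReal B) 2 (volume.restrict Ω) := by
        refine eLpNorm_mono_enorm_ae ((ae_restrict_mem hΩmeas).mono fun x hx => ?_)
        have := norm_wave_sub_rayInterpolant_le J xj φj A hM₀ hφ hM₂ hω.le
          (fun j hj => (hφj j hj x).1) (hsum x hx) (fun j hj => hsupp j hj x)
        rw [enorm_eq_self, Pi.add_apply, ← ofReal_norm, ← ofReal_norm, Real.norm_eq_abs]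
        exact (ENNReal.ofReal_le_ofReal this).trans ENNReal.ofReal_add_le
    _ ≤ eLpNorm (fun x => ‖A x - s x‖ₑ) 2 (volume.restrict Ω)
          + eLpNorm (fun _ => ENNReal.ofReal B) 2 (volume.restrict Ω) :=
        eLpNorm_add_le_of_measurable_right measurable_const one_le_two ENNReal.ofNat_ne_top
    _ = eLpNorm (fun x => A x - s x) 2 (volume.restrict Ω)
          + ENNReal.ofReal (B * Real.sqrt (volume Ω).toReal) := by
        rw [eLpNorm_enorm, eLpNorm_const' _ two_ne_zero ENNReal.ofNat_ne_top, enorm_eq_self,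
          Measure.restrict_apply_univ, ENNReal.toReal_ofNat,
          ENNReal.rpow_half_eq_ofReal_sqrt hΩfin.ne, ← ENNReal.ofReal_mul' (Real.sqrt_nonneg _)]

/-- `L²(Ω)` error of the ray-FEM nodal interpolant with exact ray directions:
for `u = A e^{iωφ}` and `u_I = Σⱼ A(xⱼ)φⱼ e^{iωℓⱼ}` built on a nonnegative partition of
unity subordinate to balls of radius `h`, one has
`‖u − u_I‖_{L²(Ω)} ≤ ‖A − Σⱼ A(xⱼ)φⱼ‖_{L²(Ω)} + (ωh²M₂M₀/2)|Ω|^{1/2}`. -/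
theorem stmt_5 {d : ℕ} (hd : 1 ≤ d) {ι : Type*} (J : Finset ι)
    (Ω : Set (EuclideanSpace ℝ (Fin d)))
    (hΩmeas : MeasurableSet Ω) (hΩfin : volume Ω < ⊤)
    (h : ℝ) (hh : 0 < h)
    (xj : ι → EuclideanSpace ℝ (Fin d))
    (φj : ι → EuclideanSpace ℝ (Fin d) → ℝ)
    (hφj : ∀ j ∈ J, ∀ x, 0 ≤ φj j x ∧ φj j x ≤ 1)
    (hsum : ∀ x ∈ Ω, ∑ j ∈ J, φj j x = 1)
    (hsupp : ∀ j ∈ J, ∀ x, h < ‖x - xj j‖ → φj j x = 0)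
    (A : EuclideanSpace ℝ (Fin d) → ℝ)
    (M₀ : ℝ) (hM₀ : ∀ j ∈ J, |A (xj j)| ≤ M₀)
    (φ : EuclideanSpace ℝ (Fin d) → ℝ) (hφ : ContDiff ℝ 2 φ)
    (M₂ : ℝ) (hM₂ : ∀ y, ‖fderiv ℝ (fun z => fderiv ℝ φ z) y‖ ≤ M₂) :
    ∀ ω : ℝ, 0 < ω →
      eLpNorm (fun x => (A x : ℂ) * Complex.exp (Complex.I * (ω : ℂ) * (φ x : ℂ))
          - ∑ j ∈ J, (A (xj j) : ℂ) * (φj j x : ℂ)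
              * Complex.exp (Complex.I * (ω : ℂ)
                  * ((φ (xj j) + ⟪gradient φ (xj j), x - xj j⟫_ℝ : ℝ) : ℂ)))
        2 (volume.restrict Ω)
      ≤ eLpNorm (fun x => A x - ∑ j ∈ J, A (xj j) * φj j x) 2 (volume.restrict Ω)
        + ENNReal.ofReal (ω * h ^ 2 * M₂ * M₀ / 2 * Real.sqrt (volume Ω).toReal) :=
  stmt_5_general J Ω hΩmeas hΩfin h xj φj hφj hsum hsupp A M₀ hM₀ φ hφ M₂ hM₂
end

section
/- For every natural number L and every real θ, the normalized Dirichlet kernel satisfies |S_L(θ)| ≤ 1, with S_L(θ) = 1 whenever θ is an integer multiple of 2π. Moreover, for every L ≥ 1 and every θ with 2π/(2L+1) ≤ |θ| ≤ π, one has |S_L(θ)| ≤ 1/2. -/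
/-!
With `z = e^{iθ}`, the kernel is `(2L+1)⁻¹ e^{-iLθ} ∑_{k<2L+1} z^k`, a geometric sum of unit-modulus
terms, so `|S_L| ≤ 1`. Away from the peak, `|∑ z^k| ≤ 2 / |z - 1| = 1 / |sin(θ/2)|`, and Jordan's
inequality gives `|sin(θ/2)| ≥ |θ|/π ≥ 2/(2L+1)` when `2π/(2L+1) ≤ |θ| ≤ π`, whence `|S_L| ≤ 1/2`.
-/

open Complex
open scoped BigOperators Real

/-- The normalized Dirichlet kernel `S_L(θ) = (2L+1)⁻¹ Σ_{l=−L}^{L} e^{ilθ}`. -/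
noncomputable def dirichletS (L : ℕ) (θ : ℝ) : ℂ :=
  (2 * (L : ℂ) + 1)⁻¹ * ∑ l ∈ Finset.Icc (-(L : ℤ)) (L : ℤ),
    Complex.exp (Complex.I * (l : ℂ) * (θ : ℂ))

open Finset

lemma card_Icc_neg_self (L : ℕ) : #(Icc (-(L : ℤ)) L) = 2 * L + 1 := by
  rw [Int.card_Icc]; omega

lemma norm_geom_sum_le_of_norm_eq_one {𝕜 : Type*} [NormedField 𝕜] {z : 𝕜} (hz : ‖z‖ = 1)
    (hz1 : z ≠ 1) (n : ℕ) : ‖∑ k ∈ range n, z ^ k‖ ≤ 2 / ‖z - 1‖ := by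
  rw [geom_sum_eq hz1, norm_div]
  gcongr
  calc ‖z ^ n - 1‖ ≤ ‖z ^ n‖ + ‖(1 : 𝕜)‖ := norm_sub_le _ _
    _ = 2 := by rw [norm_pow, hz, one_pow, norm_one]; norm_num

lemma abs_div_pi_le_abs_sin_half {θ : ℝ} (hθ : |θ| ≤ π) : |θ| / π ≤ |Real.sin (θ / 2)| := by
  have h := Real.mul_abs_le_abs_sin (x := θ / 2) (by rw [abs_div, abs_two]; linarith)
  rw [abs_div, abs_two] at h
  convert h using 1
  ring

lemma sum_Icc_exp_eq_mul_geom_sum (L : ℕ) (θ : ℝ) :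
    ∑ l ∈ Icc (-(L : ℤ)) L, exp (I * l * θ)
      = exp (-(I * L * θ)) * ∑ k ∈ range (2 * L + 1), exp (I * θ) ^ k := by
  rw [mul_sum]
  refine sum_nbij' (fun l => (l + L).toNat) (fun k => (k : ℤ) - L) ?_ ?_ ?_ ?_ ?_ <;>
    simp only [mem_Icc, mem_range]
  · omega
  · omega
  · omega
  · omega
  intro l hl
  rw [← exp_nat_mul, ← exp_add]
  congr 1
  have hcast : (((l + L).toNat : ℤ) : ℂ) = l + L := by
    rw [Int.toNat_of_nonneg (by omega)]; push_cast; ring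
  push_cast at hcast ⊢
  rw [hcast]; ring

lemma norm_dirichletS (L : ℕ) (θ : ℝ) :
    ‖dirichletS L θ‖ = (2 * L + 1 : ℝ)⁻¹ * ‖∑ k ∈ range (2 * L + 1), exp (I * θ) ^ k‖ := by
  have h : ‖exp (-(I * L * θ))‖ = 1 := by
    rw [show -(I * L * θ) = I * ((-(L * θ) : ℝ) : ℂ) by push_cast; ring]
    exact norm_exp_I_mul_ofReal _
  rw [dirichletS, sum_Icc_exp_eq_mul_geom_sum, norm_mul, norm_mul, h, one_mul, norm_inv]
  norm_cast

lemma norm_dirichletS_le_one (L : ℕ) (θ : ℝ) : ‖dirichletS L θ‖ ≤ 1 := by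
  rw [norm_dirichletS, inv_mul_le_one₀ (by positivity)]
  calc ‖∑ k ∈ range (2 * L + 1), exp (I * θ) ^ k‖
      ≤ ∑ k ∈ range (2 * L + 1), ‖exp (I * θ)‖ ^ k :=
        norm_sum_le_of_le _ fun k _ => (norm_pow _ _).le
    _ = 2 * L + 1 := by simp [norm_exp_I_mul_ofReal]

lemma dirichletS_two_pi_mul_intCast (L : ℕ) (m : ℤ) : dirichletS L (2 * π * m) = 1 := by
  have hterm : ∀ l : ℤ, exp (I * l * ((2 * π * m : ℝ) : ℂ)) = 1 := fun l => by
    rw [← exp_int_mul_two_pi_mul_I (l * m)]; push_cast; ring_nf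
  simp only [dirichletS, hterm, sum_const, card_Icc_neg_self, nsmul_eq_mul, mul_one]
  push_cast
  exact inv_mul_cancel₀ (by norm_cast)

lemma norm_dirichletS_le_half (L : ℕ) {θ : ℝ} (h₁ : 2 * π / (2 * L + 1) ≤ |θ|) (h₂ : |θ| ≤ π) :
    ‖dirichletS L θ‖ ≤ 1 / 2 := by
  have hsin : 2 / (2 * L + 1) ≤ |Real.sin (θ / 2)| := by
    calc 2 / (2 * L + 1 : ℝ) = 2 * π / (2 * L + 1) / π := by field_simp
      _ ≤ |θ| / π := by gcongr
      _ ≤ _ := abs_div_pi_le_abs_sin_half h₂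
  have hsin_pos : 0 < |Real.sin (θ / 2)| := lt_of_lt_of_le (by positivity) hsin
  have hz1 : exp (I * θ) ≠ 1 := fun h => by
    have := norm_exp_I_mul_ofReal_sub_one θ
    simp only [h, sub_self, norm_zero, norm_mul, Real.norm_eq_abs, abs_two] at this
    linarith
  rw [norm_dirichletS]
  calc (2 * L + 1 : ℝ)⁻¹ * ‖∑ k ∈ range (2 * L + 1), exp (I * θ) ^ k‖
      ≤ (2 * L + 1 : ℝ)⁻¹ * (2 / (2 * |Real.sin (θ / 2)|)) := by
        gcongr
        refine (norm_geom_sum_le_of_norm_eq_one (norm_exp_I_mul_ofReal θ) hz1 _).trans_eq ?_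
        rw [norm_exp_I_mul_ofReal_sub_one, norm_mul, Real.norm_eq_abs, Real.norm_eq_abs, abs_two]
    _ ≤ 1 / 2 := by
        rw [div_le_iff₀ (by positivity)] at hsin
        rw [mul_div_assoc', inv_mul_eq_div, div_div, div_le_div_iff₀ (by positivity) two_pos]
        nlinarith

/-- Peak structure of the normalized Dirichlet kernel: `|S_L(θ)| ≤ 1` everywhere,
`S_L(θ) = 1` at integer multiples of `2π`, and for `L ≥ 1`,
`|S_L(θ)| ≤ 1/2` whenever `2π/(2L+1) ≤ |θ| ≤ π`. -/
theorem stmt_10 (L : ℕ) :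
    (∀ θ : ℝ, ‖dirichletS L θ‖ ≤ 1) ∧
    (∀ θ : ℝ, (∃ m : ℤ, θ = 2 * π * m) → dirichletS L θ = 1) ∧
    (1 ≤ L → ∀ θ : ℝ, 2 * π / (2 * L + 1) ≤ |θ| → |θ| ≤ π →
      ‖dirichletS L θ‖ ≤ 1 / 2) :=
  ⟨norm_dirichletS_le_one L, fun _ ⟨m, hm⟩ => hm ▸ dirichletS_two_pi_mul_intCast L m,
    fun _ _ => norm_dirichletS_le_half L⟩
end

section
/- Let N ≥ 1, let θ_1, …, θ_N ∈ [0, 2π) be pairwise distinct, and let B_1, …, B_N ∈ ℂ. Define F_L(θ) := Σ_{n=1}^{N} B_n · S_L(θ − θ_n). Then (i) for each m ∈ {1,…,N}, F_L(θ_m) → B_m as L → ∞, and (ii) for every θ ∈ [0, 2π) with θ ≠ θ_n for all n, F_L(θ) → 0 as L → ∞. -/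
/-!
Writing `z = e^{iθ}`, the kernel is `S_L(θ) = (2L+1)⁻¹ Σ_{|l| ≤ L} z^l`. At `θ = 0` this is `1`;
otherwise `z ≠ 1` and the geometric sum is bounded by `2 / ‖z - 1‖` independently of `L`, so
`S_L(θ) = O(1/L)`. Since two distinct angles in `[0, 2π)` never differ by a multiple of `2π`,
`S_L(θ - θ_n)` tends to the indicator of `θ = θ_n`, and `F_L(θ)` to `Σ_n B_n [θ = θ_n]`.
-/

open Complex Filter
open scoped BigOperators Real Topology

theorem sum_Icc_zpow_eq_zpow_mul_geom_sum {K : Type*} [Field K] {z : K} (hz : z ≠ 0)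
    (L : ℕ) :
    ∑ l ∈ Finset.Icc (-(L : ℤ)) L, z ^ l =
      z ^ (-(L : ℤ)) * ∑ k ∈ Finset.range (2 * L + 1), z ^ k := by
  rw [Finset.mul_sum]
  refine Finset.sum_nbij' (fun l ↦ (l + L).toNat) (fun k ↦ (k : ℤ) - L) ?_ ?_ ?_ ?_ ?_ <;>
    simp only [Finset.mem_Icc, Finset.mem_range]
  · omega
  · omega
  · omega
  · omega
  · intro l hl
    rw [← zpow_natCast, ← zpow_add₀ hz]
    congr 1
    omega

theorem norm_sum_Icc_zpow_le {z : ℂ} (hz : ‖z‖ = 1) (hz1 : z ≠ 1) (L : ℕ) :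
    ‖∑ l ∈ Finset.Icc (-(L : ℤ)) L, z ^ l‖ ≤ 2 / ‖z - 1‖ := by
  have hz0 : z ≠ 0 := norm_ne_zero_iff.mp (by simp [hz])
  have hsub : 0 < ‖z - 1‖ := norm_pos_iff.mpr (sub_ne_zero.mpr hz1)
  rw [sum_Icc_zpow_eq_zpow_mul_geom_sum hz0, norm_mul, norm_zpow, hz, one_zpow, one_mul,
    geom_sum_eq hz1, norm_div, div_le_div_iff_of_pos_right hsub]
  calc ‖z ^ (2 * L + 1) - 1‖ ≤ ‖z ^ (2 * L + 1)‖ + ‖(1 : ℂ)‖ := norm_sub_le _ _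
    _ = 2 := by rw [norm_pow, hz, one_pow, norm_one]; norm_num

theorem dirichletS_eq_sum_zpow (L : ℕ) (x : ℝ) :
    dirichletS L x = (2 * (L : ℂ) + 1)⁻¹ *
      ∑ l ∈ Finset.Icc (-(L : ℤ)) L, cexp (x * I) ^ l := by
  unfold dirichletS
  congr 1
  refine Finset.sum_congr rfl fun l _ ↦ ?_
  rw [← exp_int_mul]
  ring_nf

theorem dirichletS_zero (L : ℕ) : dirichletS L 0 = 1 := by
  have hcard : ((Finset.Icc (-(L : ℤ)) L).card : ℂ) = 2 * L + 1 := by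
    rw [Int.card_Icc, show ((L : ℤ) + 1 - -(L : ℤ)).toNat = 2 * L + 1 by omega]
    push_cast
    ring
  have hne : (2 * (L : ℂ) + 1) ≠ 0 := by exact_mod_cast (show 2 * L + 1 ≠ 0 by omega)
  rw [dirichletS_eq_sum_zpow]
  simp only [ofReal_zero, zero_mul, Complex.exp_zero, one_zpow, Finset.sum_const, nsmul_eq_mul,
    mul_one, hcard]
  exact inv_mul_cancel₀ hne

theorem tendsto_dirichletS_zero {x : ℝ} (hx : cexp (x * I) ≠ 1) :
    Tendsto (fun L ↦ dirichletS L x) atTop (𝓝 0) := by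
  set z := cexp (x * I)
  have hz : ‖z‖ = 1 := norm_exp_ofReal_mul_I x
  have hbound (L : ℕ) : ‖dirichletS L x‖ ≤ (2 * (L : ℝ) + 1)⁻¹ * (2 / ‖z - 1‖) := by
    rw [dirichletS_eq_sum_zpow, norm_mul, norm_inv,
      show ‖2 * (L : ℂ) + 1‖ = 2 * L + 1 by norm_cast]
    gcongr
    exact norm_sum_Icc_zpow_le hz hx L
  have hinv : Tendsto (fun L : ℕ ↦ (2 * (L : ℝ) + 1)⁻¹) atTop (𝓝 0) :=
    tendsto_inv_atTop_zero.comp <| tendsto_atTop_add_const_right _ _ <|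
      tendsto_natCast_atTop_atTop.const_mul_atTop two_pos
  exact squeeze_zero_norm hbound (by simpa using hinv.mul_const (2 / ‖z - 1‖))

theorem exp_sub_mul_I_ne_one {a b s t : ℝ} (hab : b - a ≤ 2 * π) (hs : s ∈ Set.Ico a b)
    (ht : t ∈ Set.Ico a b) (hst : s ≠ t) : cexp ((s - t : ℝ) * I) ≠ 1 := by
  rw [← Circle.coe_exp, Ne, Circle.coe_eq_one, Circle.exp_sub, div_eq_one]
  exact (Circle.exp_injOn_Ico hab).ne hs ht hst

theorem tendsto_dirichletS_sub {s t : ℝ} (hs : s ∈ Set.Ico 0 (2 * π))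
    (ht : t ∈ Set.Ico 0 (2 * π)) :
    Tendsto (fun L ↦ dirichletS L (s - t)) atTop (𝓝 (if s = t then 1 else 0)) := by
  split_ifs with hst
  · simp only [hst, sub_self, dirichletS_zero, tendsto_const_nhds]
  · exact tendsto_dirichletS_zero (exp_sub_mul_I_ne_one (by simp) hs ht hst)

theorem stmt_11_general {N : ℕ} (θ : Fin N → ℝ)
    (hθmem : ∀ n, θ n ∈ Set.Ico (0 : ℝ) (2 * π))
    (hθinj : Function.Injective θ)
    (B : Fin N → ℂ) :
    (∀ m : Fin N,
      Tendsto (fun L : ℕ => ∑ n : Fin N, B n * dirichletS L (θ m - θ n))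
        atTop (𝓝 (B m))) ∧
    (∀ t ∈ Set.Ico (0 : ℝ) (2 * π), (∀ n, t ≠ θ n) →
      Tendsto (fun L : ℕ => ∑ n : Fin N, B n * dirichletS L (t - θ n))
        atTop (𝓝 0)) := by
  have hF : ∀ t ∈ Set.Ico (0 : ℝ) (2 * π),
      Tendsto (fun L : ℕ => ∑ n : Fin N, B n * dirichletS L (t - θ n)) atTop
        (𝓝 (∑ n : Fin N, B n * if t = θ n then 1 else 0)) := fun t ht ↦
    tendsto_finsetSum _ fun n _ ↦ (tendsto_dirichletS_sub ht (hθmem n)).const_mul (B n)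
  refine ⟨fun m ↦ ?_, fun t ht hne ↦ ?_⟩
  · simpa [hθinj.eq_iff] using hF (θ m) (hθmem m)
  · simpa [hne] using hF t ht

/-- Asymptotic concentration of the NMLA-filtered data
`F_L(θ) = Σ_{n} B_n S_L(θ − θ_n)` for pairwise distinct angles `θ_n ∈ [0, 2π)`:
as `L → ∞`, `F_L(θ_m) → B_m` at each plane-wave angle, and `F_L(θ) → 0` at every
other angle in `[0, 2π)`. -/
theorem stmt_11 {N : ℕ} (hN : 1 ≤ N) (θ : Fin N → ℝ)
    (hθmem : ∀ n, θ n ∈ Set.Ico (0 : ℝ) (2 * π))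
    (hθinj : Function.Injective θ)
    (B : Fin N → ℂ) :
    (∀ m : Fin N,
      Tendsto (fun L : ℕ => ∑ n : Fin N, B n * dirichletS L (θ m - θ n))
        atTop (𝓝 (B m))) ∧
    (∀ t ∈ Set.Ico (0 : ℝ) (2 * π), (∀ n, t ≠ θ n) →
      Tendsto (fun L : ℕ => ∑ n : Fin N, B n * dirichletS L (t - θ n))
        atTop (𝓝 0)) :=
  stmt_11_general θ hθmem hθinj B
end

section
/- Let d ≥ 1, x₀ ∈ E = EuclideanSpace ℝ (Fin d), r > 0, let A : E → ℝ be continuously differentiable and φ : E → ℝ twice continuously differentiable on B = closedBall(x₀, r), and assume ∇φ(x₀) ≠ 0. Set C₁ := sup_B ‖∇A‖, C₂ := sup_B |A|, C₃ := sup_B ‖∇²φ‖ (operator norm), and η₀ := ‖∇φ(x₀)‖. Define u(x) := A(x)e^{iωφ(x)}, u₀(x) := A(x₀)e^{iω(φ(x₀)+⟨∇φ(x₀), x−x₀⟩)}, δu := u − u₀, and for a unit vector ŝ ∈ E the impedance perturbation δU(x) := (1/(iωη₀))·D_ŝ(δu)(x) + δu(x), where D_ŝ denotes the directional derivative along ŝ.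 Then for every ω > 0, every unit vector ŝ, and x = x₀ + r ŝ, |δU(x)| ≤ C₁/(ω η₀) + 2 r C₁ + ( r C₂/η₀ + ω r² C₂ )·C₃. -/
/-!
Expanding `D_ŝ(δu)` splits `δU(x)` into terms controlled by three defects between `x₀` and
`x = x₀ + rŝ`: the amplitude change `A(x) - A(x₀)` and the phase-gradient change
`∇φ(x) - ∇φ(x₀)`, both bounded by the mean value inequality (by `C₁r` and `C₃r`), and the
phase error `φ(x) - φ(x₀) - ⟨∇φ(x₀), x - x₀⟩`, bounded by `C₃r²/2` by a second-order Taylor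
estimate. The phase error enters through `|e^{iωa} - e^{iωb}| ≤ ω|a - b|`, which produces the
factor `ω` in the leading term `ωr²C₂C₃`.
-/

open Complex Metric Set
open scoped InnerProductSpace

theorem norm_cexp_I_mul_sub_cexp_I_mul_le {ω : ℝ} (hω : 0 ≤ ω) (a b : ℝ) :
    ‖Complex.exp (I * ω * a) - Complex.exp (I * ω * b)‖ ≤ ω * |a - b| := by
  have hsplit : Complex.exp (I * ω * a) - Complex.exp (I * ω * b)
      = Complex.exp (I * ↑(ω * b)) * (Complex.exp (I * ↑(ω * (a - b))) - 1) := by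
    rw [mul_sub, ← Complex.exp_add]; push_cast; ring_nf
  rw [hsplit, norm_mul, Complex.norm_exp_I_mul_ofReal, one_mul]
  calc _ ≤ ‖ω * (a - b)‖ := Real.norm_exp_I_mul_ofReal_sub_one_le
    _ = ω * |a - b| := by rw [Real.norm_eq_abs, abs_mul, abs_of_nonneg hω]

theorem norm_sub_le_half_of_norm_deriv_le_mul {F : Type*} [NormedAddCommGroup F]
    [NormedSpace ℝ F] {g g' : ℝ → F} {K : ℝ}
    (hg : ∀ t ∈ Icc (0 : ℝ) 1, HasDerivWithinAt g (g' t) (Icc 0 1) t)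
    (hg' : ∀ t ∈ Ico (0 : ℝ) 1, ‖g' t‖ ≤ K * t) :
    ‖g 1 - g 0‖ ≤ K / 2 := by
  have hcont : ContinuousOn (fun t => g t - g 0) (Icc 0 1) :=
    (HasDerivWithinAt.continuousOn hg).sub continuousOn_const
  have hderiv (t : ℝ) (ht : t ∈ Ico (0 : ℝ) 1) :
      HasDerivWithinAt (fun t => g t - g 0) (g' t) (Ici t) t :=
    ((hg t (Ico_subset_Icc_self ht)).sub_const (g 0)).mono_of_mem_nhdsWithin
      (Icc_mem_nhdsGE_of_mem ht)
  have hbound (t : ℝ) : HasDerivAt (fun t => K * t ^ 2 / 2) (K * t) t :=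
    (((hasDerivAt_pow 2 t).const_mul K).div_const 2).congr_deriv (by push_cast; ring)
  simpa using image_norm_le_of_norm_deriv_right_le_deriv_boundary hcont hderiv (by simp)
    hbound hg' (right_mem_Icc.2 zero_le_one)

theorem Convex.norm_sub_sub_le_of_norm_hasFDerivWithin_sub_le {E F : Type*}
    [NormedAddCommGroup E] [NormedSpace ℝ E] [NormedAddCommGroup F] [NormedSpace ℝ F]
    {f : E → F} {f' : E → E →L[ℝ] F} {s : Set E} {x y : E} {C : ℝ} (hs : Convex ℝ s)
    (hf : ∀ z ∈ s, HasFDerivWithinAt f (f' z) s z)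
    (hf' : ∀ z ∈ s, ‖f' z - f' x‖ ≤ C * ‖z - x‖) (hx : x ∈ s) (hy : y ∈ s) :
    ‖f y - f x - f' x (y - x)‖ ≤ C / 2 * ‖y - x‖ ^ 2 := by
  set v := y - x
  have hseg (t : ℝ) (ht : t ∈ Icc (0 : ℝ) 1) : x + t • v ∈ s := hs.add_smul_sub_mem hx hy ht
  have hline (t : ℝ) : HasDerivAt (fun t : ℝ => x + t • v) v t := by
    simpa using ((hasDerivAt_id t).smul_const v).const_add x
  have key := norm_sub_le_half_of_norm_deriv_le_mul (K := C * ‖v‖ ^ 2)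
    (g := fun t => f (x + t • v) - t • f' x v) (g' := fun t => f' (x + t • v) v - f' x v)
    (fun t ht => ((hf _ (hseg t ht)).comp_hasDerivWithinAt t (hline t).hasDerivWithinAt
      hseg).sub ((hasDerivAt_id t).smul_const (f' x v)).hasDerivWithinAt |>.congr_deriv
      (by simp))
    (fun t ht => calc
      ‖f' (x + t • v) v - f' x v‖ ≤ ‖f' (x + t • v) - f' x‖ * ‖v‖ := by
          rw [← sub_apply]; exact ContinuousLinearMap.le_opNorm _ _
      _ ≤ C * ‖t • v‖ * ‖v‖ := by
          gcongr; simpa using hf' _ (hseg t (Ico_subset_Icc_self ht))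
      _ = C * ‖v‖ ^ 2 * t := by rw [norm_smul, Real.norm_of_nonneg ht.1]; ring)
  have hy' : x + v = y := add_sub_cancel x y
  simp only [one_smul, zero_smul, add_zero, sub_zero, hy'] at key
  calc ‖f y - f x - f' x v‖ = ‖f y - f' x v - f x‖ := by rw [sub_right_comm]
    _ ≤ C * ‖v‖ ^ 2 / 2 := key
    _ = C / 2 * ‖v‖ ^ 2 := by ring

theorem ContDiffOn.norm_fderivWithin_closedBall_sub_le {E F : Type*} [NormedAddCommGroup E]
    [NormedSpace ℝ E] [NormedAddCommGroup F] [NormedSpace ℝ F] {f : E → F} {x₀ y : E}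
    {r C : ℝ} (hr : 0 < r) (hf : ContDiffOn ℝ 2 f (closedBall x₀ r))
    (hC : ∀ z ∈ closedBall x₀ r,
      ‖fderivWithin ℝ (fderivWithin ℝ f (closedBall x₀ r)) (closedBall x₀ r) z‖ ≤ C)
    (hy : y ∈ closedBall x₀ r) :
    ‖fderivWithin ℝ f (closedBall x₀ r) y - fderivWithin ℝ f (closedBall x₀ r) x₀‖
      ≤ C * ‖y - x₀‖ :=
  have hB : UniqueDiffOn ℝ (closedBall x₀ r) := uniqueDiffOn_convex (convex_closedBall x₀ r)
    (by simpa [interior_closedBall x₀ hr.ne'] using hr)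
  (convex_closedBall x₀ r).norm_image_sub_le_of_norm_fderivWithin_le
    ((hf.fderivWithin hB le_rfl).differentiableOn one_ne_zero) hC
    (mem_closedBall_self hr.le) hy

theorem HasFDerivWithinAt.ofReal_mul_cexp_I_mul {E : Type*} [NormedAddCommGroup E]
    [NormedSpace ℝ E] {A φ : E → ℝ} {A' φ' : E →L[ℝ] ℝ} {s : Set E} {x : E}
    (hA : HasFDerivWithinAt A A' s x) (hφ : HasFDerivWithinAt φ φ' s x) (ω : ℝ) :
    HasFDerivWithinAt (fun y => (A y : ℂ) * Complex.exp (I * (ω : ℂ) * (φ y : ℂ)))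
      (Complex.exp (I * (ω : ℂ) * (φ x : ℂ))
        • (ofRealCLM.comp A' + (I * (ω : ℂ) * (A x : ℂ)) • ofRealCLM.comp φ')) s x := by
  have hA' := ofRealCLM.hasFDerivAt.comp_hasFDerivWithinAt x hA
  have hφ' := (ofRealCLM.hasFDerivAt.comp_hasFDerivWithinAt x hφ).const_mul (I * ω)
  refine (hA'.mul hφ'.cexp).congr_fderiv ?_
  ext v
  simp only [Function.comp_apply, ofRealCLM_apply, add_apply, smul_apply,
    ContinuousLinearMap.comp_apply, smul_eq_mul, smul_add]
  ring

theorem fderivWithin_ofReal_mul_cexp_sub_planeWave_apply {E : Type*} [NormedAddCommGroup E]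
    [InnerProductSpace ℝ E] {A φ : E → ℝ} {s : Set E} {x : E} (hs : UniqueDiffWithinAt ℝ s x)
    (hA : DifferentiableWithinAt ℝ A s x) (hφ : DifferentiableWithinAt ℝ φ s x)
    (ω a₀ c : ℝ) (g x₀ v : E) :
    fderivWithin ℝ (fun y => (A y : ℂ) * Complex.exp (I * ω * (φ y : ℂ))
        - (a₀ : ℂ) * Complex.exp (I * ω * ((c + ⟪g, y - x₀⟫_ℝ : ℝ) : ℂ))) s x v
      = (fderivWithin ℝ A s x v + I * ω * A x * fderivWithin ℝ φ s x v)
          * Complex.exp (I * ω * (φ x : ℂ))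
        - I * ω * a₀ * ⟪g, v⟫_ℝ * Complex.exp (I * ω * ((c + ⟪g, x - x₀⟫_ℝ : ℝ) : ℂ)) := by
  have hphase : HasFDerivWithinAt (fun y => c + ⟪g, y - x₀⟫_ℝ) (innerSL ℝ g) s x :=
    (((innerSL ℝ g).hasFDerivAt.comp x ((hasFDerivAt_id x).sub_const x₀)).const_add c
      ).hasFDerivWithinAt
  have hu := hA.hasFDerivWithinAt.ofReal_mul_cexp_I_mul hφ.hasFDerivWithinAt ω
  have hu₀ := (hasFDerivWithinAt_const a₀ x s).ofReal_mul_cexp_I_mul hphase ω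
  rw [(hu.fun_sub hu₀).fderivWithin hs]
  simp only [smul_add, ofReal_add, ContinuousLinearMap.comp_zero, zero_add, sub_apply, add_apply,
    smul_apply, ContinuousLinearMap.comp_apply, ofRealCLM_apply, smul_eq_mul, coe_innerSL_apply]
  ring

theorem norm_ofReal_mul_sub_ofReal_mul_le (a b : ℝ) {e₁ e₂ : ℂ} (he₁ : ‖e₁‖ = 1) :
    ‖(a : ℂ) * e₁ - b * e₂‖ ≤ |a - b| + |b| * ‖e₁ - e₂‖ := calc
  ‖(a : ℂ) * e₁ - b * e₂‖ = ‖((a - b : ℝ) : ℂ) * e₁ + b * (e₁ - e₂)‖ := by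
    push_cast; congr 1; ring
  _ ≤ |a - b| + |b| * ‖e₁ - e₂‖ := by
    simpa only [norm_mul, norm_real, Real.norm_eq_abs, he₁, mul_one] using
      norm_add_le (((a - b : ℝ) : ℂ) * e₁) (b * (e₁ - e₂))

theorem norm_impedance_expansion_le {ω η a a₀ α p q C₁ C₂ C₃ r : ℝ} {e₁ e₂ : ℂ}
    (hω : 0 < ω) (hη : 0 < η) (he₁ : ‖e₁‖ = 1) (hα : |α| ≤ C₁) (ha : |a| ≤ C₂)
    (ha₀ : |a₀| ≤ C₂) (haa₀ : |a - a₀| ≤ C₁ * r) (hpq : |p - q| ≤ C₃ * r) (hq : |q| ≤ η)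
    (he : ‖e₁ - e₂‖ ≤ ω * (C₃ / 2 * r ^ 2)) :
    ‖1 / (I * ω * η) * ((α + I * ω * a * p) * e₁ - I * ω * a₀ * q * e₂) + (a * e₁ - a₀ * e₂)‖
      ≤ C₁ / (ω * η) + 2 * r * C₁ + (r * C₂ / η + ω * r ^ 2 * C₂) * C₃ := by
  have hC₂ : 0 ≤ C₂ := (abs_nonneg a₀).trans ha₀
  have hC₁r : 0 ≤ C₁ * r := (abs_nonneg _).trans haa₀
  have hsplit : 1 / (I * ω * η) * ((α + I * ω * a * p) * e₁ - I * ω * a₀ * q * e₂)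
      + (a * e₁ - a₀ * e₂)
      = α * e₁ / (I * ω * η) + ((a * p : ℝ) * e₁ - (a₀ * q : ℝ) * e₂) / η
        + (a * e₁ - a₀ * e₂) := by
    have : (ω : ℂ) ≠ 0 := ofReal_ne_zero.2 hω.ne'
    have : (η : ℂ) ≠ 0 := ofReal_ne_zero.2 hη.ne'
    field_simp
    push_cast
    ring
  have hT₁ : ‖α * e₁ / (I * ω * η)‖ ≤ C₁ / (ω * η) := by
    simp only [norm_div, norm_mul, norm_I, norm_real, Real.norm_eq_abs, he₁, abs_of_pos hω,
      abs_of_pos hη, one_mul, mul_one]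
    gcongr
  have hap : |a * p - a₀ * q| ≤ C₂ * (C₃ * r) + C₁ * r * η := calc
    |a * p - a₀ * q| = |a * (p - q) + (a - a₀) * q| := by congr 1; ring
    _ ≤ |a| * |p - q| + |a - a₀| * |q| := by
      simpa only [abs_mul] using abs_add_le (a * (p - q)) ((a - a₀) * q)
    _ ≤ C₂ * (C₃ * r) + C₁ * r * η := by gcongr
  have hT₂ : ‖((a * p : ℝ) * e₁ - (a₀ * q : ℝ) * e₂) / η‖
      ≤ (C₂ * (C₃ * r) + C₁ * r * η + C₂ * η * (ω * (C₃ / 2 * r ^ 2))) / η := by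
    rw [norm_div, norm_real, Real.norm_of_nonneg hη.le]
    gcongr
    refine (norm_ofReal_mul_sub_ofReal_mul_le _ _ he₁).trans ?_
    rw [abs_mul]
    gcongr
  have hT₃ : ‖(a : ℂ) * e₁ - a₀ * e₂‖ ≤ C₁ * r + C₂ * (ω * (C₃ / 2 * r ^ 2)) :=
    (norm_ofReal_mul_sub_ofReal_mul_le _ _ he₁).trans (by gcongr)
  rw [hsplit]
  refine (norm_add₃_le ..).trans ?_
  calc _ ≤ C₁ / (ω * η) + (C₂ * (C₃ * r) + C₁ * r * η + C₂ * η * (ω * (C₃ / 2 * r ^ 2))) / η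
        + (C₁ * r + C₂ * (ω * (C₃ / 2 * r ^ 2))) := by gcongr
    _ = C₁ / (ω * η) + 2 * r * C₁ + (r * C₂ / η + ω * r ^ 2 * C₂) * C₃ := by
      field_simp; ring

theorem stmt_14_general {d : ℕ}
    (x₀ : EuclideanSpace ℝ (Fin d)) (r : ℝ) (hr : 0 < r)
    (A φ : EuclideanSpace ℝ (Fin d) → ℝ)
    (hA : ContDiffOn ℝ 1 A (closedBall x₀ r))
    (hφ : ContDiffOn ℝ 2 φ (closedBall x₀ r))
    (hgrad : gradient φ x₀ ≠ 0)
    (C₁ C₂ C₃ : ℝ)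
    (hC₁ : ∀ y ∈ closedBall x₀ r, ‖fderivWithin ℝ A (closedBall x₀ r) y‖ ≤ C₁)
    (hC₂ : ∀ y ∈ closedBall x₀ r, |A y| ≤ C₂)
    (hC₃ : ∀ y ∈ closedBall x₀ r,
      ‖fderivWithin ℝ (fun z => fderivWithin ℝ φ (closedBall x₀ r) z)
          (closedBall x₀ r) y‖ ≤ C₃) :
    ∀ ω : ℝ, 0 < ω →
      ∀ δu : EuclideanSpace ℝ (Fin d) → ℂ,
      (∀ y, δu y = (A y : ℂ) * Complex.exp (Complex.I * (ω : ℂ) * (φ y : ℂ))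
          - (A x₀ : ℂ) * Complex.exp (Complex.I * (ω : ℂ)
              * ((φ x₀ + ⟪gradient φ x₀, y - x₀⟫_ℝ : ℝ) : ℂ))) →
      ∀ s : EuclideanSpace ℝ (Fin d), ‖s‖ = 1 →
        ‖((1 / (Complex.I * (ω : ℂ) * ((‖gradient φ x₀‖ : ℝ) : ℂ)))
              * fderivWithin ℝ δu (closedBall x₀ r) (x₀ + r • s) s
            + δu (x₀ + r • s))‖
        ≤ C₁ / (ω * ‖gradient φ x₀‖) + 2 * r * C₁
          + (r * C₂ / ‖gradient φ x₀‖ + ω * r ^ 2 * C₂) * C₃ := by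
  intro ω hω δu hδu s hs
  set B := closedBall x₀ r
  set g := gradient φ x₀
  set x := x₀ + r • s
  have hxx₀ : ‖x - x₀‖ = r := by simp [x, norm_smul, hs, hr.le]
  have hx₀B : x₀ ∈ B := mem_closedBall_self hr.le
  have hxB : x ∈ B := mem_closedBall_iff_norm.2 hxx₀.le
  have hxB' : UniqueDiffWithinAt ℝ B x :=
    uniqueDiffWithinAt_convex (convex_closedBall x₀ r)
      (by simpa [B, interior_closedBall x₀ hr.ne'] using hr) (subset_closure hxB)
  have hφ'x₀ (v) : fderivWithin ℝ φ B x₀ v = ⟪g, v⟫_ℝ := by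
    rw [inner_gradient_left, ← fderivWithin_of_mem_nhds (closedBall_mem_nhds x₀ hr)]
  have hφd := hφ.differentiableOn two_ne_zero
  have hAd := hA.differentiableOn one_ne_zero
  have hα : |fderivWithin ℝ A B x s| ≤ C₁ := by
    simpa [hs] using (fderivWithin ℝ A B x).le_of_opNorm_le (hC₁ x hxB) s
  have hΔA : |A x - A x₀| ≤ C₁ * r := by
    simpa [hxx₀] using
      (convex_closedBall x₀ r).norm_image_sub_le_of_norm_fderivWithin_le hAd hC₁ hx₀B hxB
  have hΔφ' : |fderivWithin ℝ φ B x s - ⟪g, s⟫_ℝ| ≤ C₃ * r := by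
    simpa [← hφ'x₀, hs, hxx₀] using (fderivWithin ℝ φ B x - fderivWithin ℝ φ B x₀).le_of_opNorm_le
      (hφ.norm_fderivWithin_closedBall_sub_le hr hC₃ hxB) s
  have hphase : |φ x - (φ x₀ + ⟪g, x - x₀⟫_ℝ)| ≤ C₃ / 2 * r ^ 2 := by
    simpa only [Real.norm_eq_abs, hφ'x₀, hxx₀, sub_sub] using
      (convex_closedBall x₀ r).norm_sub_sub_le_of_norm_hasFDerivWithin_sub_le
        (fun z hz => (hφd z hz).hasFDerivWithinAt)
        (fun z hz => hφ.norm_fderivWithin_closedBall_sub_le hr hC₃ hz) hx₀B hxB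
  rw [funext hδu, fderivWithin_ofReal_mul_cexp_sub_planeWave_apply hxB' (hAd x hxB) (hφd x hxB)]
  exact norm_impedance_expansion_le hω (norm_pos_iff.2 hgrad) (by simp [norm_exp]) hα
    (hC₂ x hxB) (hC₂ x₀ hx₀B) hΔA hΔφ' (by simpa [hs] using abs_real_inner_le_norm g s)
    ((norm_cexp_I_mul_sub_cexp_I_mul_le hω.le _ _).trans (by gcongr))

/-- Bound on the impedance-data perturbation seen by NMLA: for a single smooth wave front
`u = A e^{iωφ}`, its local plane-wave approximation
`u₀(x) = A(x₀)e^{iω(φ(x₀) + ⟨∇φ(x₀), x − x₀⟩)}`, `δu = u − u₀` and the impedance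
perturbation `δU(x) = (1/(iωη₀))D_ŝ(δu)(x) + δu(x)` with `η₀ = ‖∇φ(x₀)‖`, one has, at
`x = x₀ + rŝ` for any unit `ŝ`,
`|δU(x)| ≤ C₁/(ωη₀) + 2rC₁ + (rC₂/η₀ + ωr²C₂)C₃`
where `C₁ = sup_B ‖∇A‖`, `C₂ = sup_B |A|`, `C₃ = sup_B ‖∇²φ‖` on `B = closedBall(x₀, r)`. -/
theorem stmt_14 {d : ℕ} (hd : 1 ≤ d)
    (x₀ : EuclideanSpace ℝ (Fin d)) (r : ℝ) (hr : 0 < r)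
    (A φ : EuclideanSpace ℝ (Fin d) → ℝ)
    (hA : ContDiffOn ℝ 1 A (closedBall x₀ r))
    (hφ : ContDiffOn ℝ 2 φ (closedBall x₀ r))
    (hgrad : gradient φ x₀ ≠ 0)
    (C₁ C₂ C₃ : ℝ)
    (hC₁ : ∀ y ∈ closedBall x₀ r, ‖fderivWithin ℝ A (closedBall x₀ r) y‖ ≤ C₁)
    (hC₂ : ∀ y ∈ closedBall x₀ r, |A y| ≤ C₂)
    (hC₃ : ∀ y ∈ closedBall x₀ r,
      ‖fderivWithin ℝ (fun z => fderivWithin ℝ φ (closedBall x₀ r) z)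
          (closedBall x₀ r) y‖ ≤ C₃) :
    ∀ ω : ℝ, 0 < ω →
      ∀ δu : EuclideanSpace ℝ (Fin d) → ℂ,
      (∀ y, δu y = (A y : ℂ) * Complex.exp (Complex.I * (ω : ℂ) * (φ y : ℂ))
          - (A x₀ : ℂ) * Complex.exp (Complex.I * (ω : ℂ)
              * ((φ x₀ + ⟪gradient φ x₀, y - x₀⟫_ℝ : ℝ) : ℂ))) →
      ∀ s : EuclideanSpace ℝ (Fin d), ‖s‖ = 1 →
        ‖((1 / (Complex.I * (ω : ℂ) * ((‖gradient φ x₀‖ : ℝ) : ℂ)))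
              * fderivWithin ℝ δu (closedBall x₀ r) (x₀ + r • s) s
            + δu (x₀ + r • s))‖
        ≤ C₁ / (ω * ‖gradient φ x₀‖) + 2 * r * C₁
          + (r * C₂ / ‖gradient φ x₀‖ + ω * r ^ 2 * C₂) * C₃ :=
  stmt_14_general x₀ r hr A φ hA hφ hgrad C₁ C₂ C₃ hC₁ hC₂ hC₃
end
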